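/- arXiv:1403.4687 — 4 statements merged into one kernel-verified Lean document; each statement's English description precedes it below -/
import Mathlib

section
/- For any two positive semi-definite operators M and N on a finite-dimensional Hilbert space, the trace-norm distance and fidelity satisfy ‖M − N‖₁² + 4‖√M √N‖₁² ≤ (Tr M + Tr N)². -/
open ComplexOrder
/-- The square root of a positive semi-definite matrix (Mathlib's former `Matrix.PosSemidef.sqrt`). -/
noncomputable def Matrix.PosSemidef.sqrt {n 𝕜 : Type*} [Fintype n] [DecidableEq n] [RCLike 𝕜]
    {A : Matrix n n 𝕜} (hA : A.PosSemidef) : Matrix n n 𝕜 :=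
  hA.1.eigenvectorUnitary.1 * Matrix.diagonal ((↑) ∘ Real.sqrt ∘ hA.1.eigenvalues) *
    (star hA.1.eigenvectorUnitary : Matrix n n 𝕜)
/-- Trace norm ‖A‖₁ = Tr √(AᴴA). -/
noncomputable def traceNorm {n : Type*} [Fintype n] [DecidableEq n]
    (A : Matrix n n ℂ) : ℝ :=
  ((Matrix.posSemidef_conjTranspose_mul_self A).sqrt.trace).re

/-! Put `A = √M` and `B = √N U`, where `U` is the unitary of a polar decomposition
`U (A √N) = |A √N|`. Then `B Bᴴ = N` and `Tr (Aᴴ B) = ‖√M √N‖₁`, so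
`‖A ± B‖₂² = Tr M + Tr N ± 2 ‖√M √N‖₁`. On the other hand
`2 (M - N) = (A + B) (A - B)ᴴ + (A - B) (A + B)ᴴ`, and testing this against the unitary of a polar
decomposition of `M - N`, the Cauchy–Schwarz inequality for the Hilbert–Schmidt inner product gives
`‖M - N‖₁² ≤ ‖A + B‖₂² ‖A - B‖₂² = (Tr M + Tr N)² - 4 ‖√M √N‖₁²`. -/

open Matrix

section

variable {n 𝕜 : Type*} [Fintype n] [RCLike 𝕜]

theorem Matrix.re_trace_conjTranspose_add_mul_add (X Y : Matrix n n 𝕜) :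
    RCLike.re ((X + Y)ᴴ * (X + Y)).trace =
      RCLike.re (Xᴴ * X).trace + RCLike.re (Yᴴ * Y).trace + 2 * RCLike.re (Xᴴ * Y).trace := by
  have hYX : RCLike.re (Yᴴ * X).trace = RCLike.re (Xᴴ * Y).trace := by
    rw [← RCLike.conj_re, ← RCLike.star_def, ← trace_conjTranspose, conjTranspose_mul,
      conjTranspose_conjTranspose]
  simp only [conjTranspose_add, Matrix.add_mul, Matrix.mul_add, trace_add, map_add, hYX]
  ring

theorem Matrix.re_trace_conjTranspose_sub_mul_sub (X Y : Matrix n n 𝕜) :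
    RCLike.re ((X - Y)ᴴ * (X - Y)).trace =
      RCLike.re (Xᴴ * X).trace + RCLike.re (Yᴴ * Y).trace - 2 * RCLike.re (Xᴴ * Y).trace := by
  rw [sub_eq_add_neg, re_trace_conjTranspose_add_mul_add, conjTranspose_neg, Matrix.neg_mul,
    Matrix.mul_neg, neg_neg, Matrix.mul_neg, trace_neg, map_neg]
  ring

theorem LinearMap.exists_linearIsometry_comp_eq_of_norm_eq {E V : Type*}
    [AddCommGroup E] [Module 𝕜 E] [NormedAddCommGroup V] [InnerProductSpace 𝕜 V]
    [FiniteDimensional 𝕜 V] (T P : E →ₗ[𝕜] V) (h : ∀ x, ‖T x‖ = ‖P x‖) :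
    ∃ U : V →ₗᵢ[𝕜] V, ∀ x, U (P x) = T x := by
  have hker : LinearMap.ker P ≤ LinearMap.ker T := fun x hx => by
    simpa [← norm_eq_zero, h] using hx
  let L : LinearMap.range P →ₗ[𝕜] V :=
    (LinearMap.ker P).liftQ T hker ∘ₗ P.quotKerEquivRange.symm.toLinearMap
  have hL : ∀ x, L ⟨P x, LinearMap.mem_range_self P x⟩ = T x := fun x => by
    simp [L, LinearMap.quotKerEquivRange_symm_apply_image]
  let L' : LinearMap.range P →ₗᵢ[𝕜] V :=
    { toLinearMap := L
      norm_map' := by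
        rintro ⟨_, x, rfl⟩
        rw [hL, h]
        rfl }
  exact ⟨L'.extend, fun x => (L'.extend_apply ⟨P x, _⟩).trans (hL x)⟩

variable [DecidableEq n]

namespace Matrix.PosSemidef

open scoped MatrixOrder

theorem sqrt_eq_cfcSqrt {A : Matrix n n 𝕜} (hA : A.PosSemidef) : hA.sqrt = CFC.sqrt A := by
  rw [CFC.sqrt_eq_real_sqrt A hA.nonneg, cfcₙ_eq_cfc, hA.1.cfc_eq, IsHermitian.cfc,
    Unitary.conjStarAlgAut_apply]
  rfl

theorem posSemidef_sqrt {A : Matrix n n 𝕜} (hA : A.PosSemidef) : hA.sqrt.PosSemidef := by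
  rw [sqrt_eq_cfcSqrt]
  exact (CFC.sqrt_nonneg A).posSemidef

theorem sqrt_mul_sqrt {A : Matrix n n 𝕜} (hA : A.PosSemidef) : hA.sqrt * hA.sqrt = A := by
  rw [sqrt_eq_cfcSqrt]
  exact CFC.sqrt_mul_sqrt_self A hA.nonneg

end Matrix.PosSemidef

theorem Matrix.exists_mem_unitaryGroup_eq_mul_of_conjTranspose_mul_self_eq {X Y : Matrix n n 𝕜}
    (h : Xᴴ * X = Yᴴ * Y) : ∃ W ∈ unitaryGroup n 𝕜, X = W * Y := by
  let Φ := toEuclideanCLM (n := n) (𝕜 := 𝕜)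
  have hgram : ∀ Z, star (Φ Z) * Φ Z = Φ (Zᴴ * Z) := fun Z => by
    rw [map_mul, ← star_eq_conjTranspose, map_star]
  have hnorm : ∀ v, ‖Φ X v‖ = ‖Φ Y v‖ := fun v => by
    rw [← sq_eq_sq₀ (norm_nonneg _) (norm_nonneg _),
      ContinuousLinearMap.apply_norm_sq_eq_inner_adjoint_left,
      ContinuousLinearMap.apply_norm_sq_eq_inner_adjoint_left,
      ← ContinuousLinearMap.star_eq_adjoint, ← ContinuousLinearMap.star_eq_adjoint,
      ← ContinuousLinearMap.mul_def, ← ContinuousLinearMap.mul_def, hgram, hgram, h]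
  obtain ⟨U, hU⟩ := LinearMap.exists_linearIsometry_comp_eq_of_norm_eq
    (Φ X).toLinearMap (Φ Y).toLinearMap hnorm
  refine ⟨Φ.symm U.toContinuousLinearMap, ?_, ?_⟩
  · rw [mem_unitaryGroup_iff', ← (EquivLike.injective Φ).eq_iff, map_mul, map_star, map_one,
      StarAlgEquiv.apply_symm_apply, ContinuousLinearMap.star_eq_adjoint]
    exact (ContinuousLinearMap.norm_map_iff_adjoint_comp_self _).mp U.norm_map
  · apply EquivLike.injective Φ
    ext1 v
    rw [map_mul, StarAlgEquiv.apply_symm_apply]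
    exact (hU v).symm

theorem Matrix.sq_re_trace_conjTranspose_mul_le (Y Z : Matrix n n 𝕜) :
    RCLike.re (Yᴴ * Z).trace ^ 2 ≤ RCLike.re (Yᴴ * Y).trace * RCLike.re (Zᴴ * Z).trace := by
  let _ := toMatrixSeminormedAddCommGroup (1 : Matrix n n 𝕜) PosSemidef.one
  let _ := toMatrixInnerProductSpace (1 : Matrix n n 𝕜) PosSemidef.one
  have hinner : ∀ A B : Matrix n n 𝕜, inner 𝕜 Aᴴ Bᴴ = (Bᴴ * A).trace := fun A B => by
    change (Bᴴ * 1 * Aᴴᴴ).trace = _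
    rw [Matrix.mul_one, conjTranspose_conjTranspose]
  have hcs := inner_mul_inner_self_le (𝕜 := 𝕜) Zᴴ Yᴴ
  rw [norm_inner_symm Yᴴ Zᴴ, hinner, hinner, hinner, ← sq] at hcs
  calc RCLike.re (Yᴴ * Z).trace ^ 2 ≤ ‖(Yᴴ * Z).trace‖ ^ 2 := by
        rw [← sq_abs]
        exact pow_le_pow_left₀ (abs_nonneg _) (RCLike.abs_re_le_norm _) 2
    _ ≤ _ := by rwa [mul_comm]

theorem Matrix.sq_re_trace_mul_mul_conjTranspose_le {U : Matrix n n 𝕜}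
    (hU : U ∈ unitaryGroup n 𝕜) (Y Z : Matrix n n 𝕜) :
    RCLike.re (U * Y * Zᴴ).trace ^ 2 ≤ RCLike.re (Yᴴ * Y).trace * RCLike.re (Zᴴ * Z).trace := by
  have hUY : (U * Y)ᴴ * (U * Y) = Yᴴ * Y := by
    rw [conjTranspose_mul, Matrix.mul_assoc, ← Matrix.mul_assoc Uᴴ, ← star_eq_conjTranspose U,
      mem_unitaryGroup_iff'.mp hU, Matrix.one_mul]
  rw [trace_mul_comm, mul_comm (RCLike.re _), ← hUY]
  exact sq_re_trace_conjTranspose_mul_le Z (U * Y)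

theorem exists_mem_unitaryGroup_trace_mul_eq_traceNorm (X : Matrix n n ℂ) :
    ∃ U ∈ unitaryGroup n ℂ, (U * X).trace = traceNorm X := by
  have hXX := posSemidef_conjTranspose_mul_self X
  have hP := hXX.posSemidef_sqrt
  have hPP : hXX.sqrtᴴ * hXX.sqrt = Xᴴ * X := by rw [hP.1.eq, hXX.sqrt_mul_sqrt]
  obtain ⟨W, hW, hXW⟩ := exists_mem_unitaryGroup_eq_mul_of_conjTranspose_mul_self_eq hPP.symm
  refine ⟨star W, Unitary.star_mem hW, ?_⟩
  have hWX : star W * X = hXX.sqrt := by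
    conv_lhs => rw [hXW, ← Matrix.mul_assoc, mem_unitaryGroup_iff'.mp hW, Matrix.one_mul]
  have htrace : hXX.sqrt.trace = hXX.sqrt.trace.re := by
    apply Complex.eq_re_of_ofReal_le (r := 0)
    rw [Complex.ofReal_zero]
    exact hP.trace_nonneg
  rw [hWX, htrace]
  rfl

theorem traceNorm_mul_conjTranspose_sub_sq_le (C E : Matrix n n ℂ) :
    traceNorm (C * Cᴴ - E * Eᴴ) ^ 2 ≤
      ((C + E)ᴴ * (C + E)).trace.re * ((C - E)ᴴ * (C - E)).trace.re := by
  obtain ⟨U, hU, hUD⟩ := exists_mem_unitaryGroup_trace_mul_eq_traceNorm (C * Cᴴ - E * Eᴴ)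
  have hsplit : U * (C * Cᴴ - E * Eᴴ) + U * (C * Cᴴ - E * Eᴴ) =
      U * (C + E) * (C - E)ᴴ + U * (C - E) * (C + E)ᴴ := by
    rw [conjTranspose_add, conjTranspose_sub]
    noncomm_ring
  have htrace := congrArg (fun X => (trace X).re) hsplit
  simp only [trace_add, Complex.add_re, hUD, Complex.ofReal_re] at htrace
  have h₁ := sq_re_trace_mul_mul_conjTranspose_le hU (C + E) (C - E)
  have h₂ := sq_re_trace_mul_mul_conjTranspose_le hU (C - E) (C + E)
  simp only [RCLike.re_to_complex] at h₁ h₂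
  set a := (U * (C + E) * (C - E)ᴴ).trace.re
  set b := (U * (C - E) * (C + E)ᴴ).trace.re
  have hsq : 4 * traceNorm (C * Cᴴ - E * Eᴴ) ^ 2 = (a + b) ^ 2 := by rw [← htrace]; ring
  nlinarith [sq_nonneg (a - b)]

end

/-- For PSD operators M, N: ‖M − N‖₁² + 4‖√M √N‖₁² ≤ (Tr M + Tr N)². -/
theorem traceNorm_sq_add_four_fidelity_sq_le
    {n : Type*} [Fintype n] [DecidableEq n]
    (M N : Matrix n n ℂ) (hM : M.PosSemidef) (hN : N.PosSemidef) :
    traceNorm (M - N) ^ 2 + 4 * traceNorm (hM.sqrt * hN.sqrt) ^ 2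
      ≤ (M.trace.re + N.trace.re) ^ 2 := by
  set A := hM.sqrt
  obtain ⟨U, hU, hF⟩ := exists_mem_unitaryGroup_trace_mul_eq_traceNorm (A * hN.sqrt)
  set B := hN.sqrt * U
  have hA : Aᴴ = A := hM.posSemidef_sqrt.1.eq
  have hAA : A * Aᴴ = M := by rw [hA, hM.sqrt_mul_sqrt]
  have hBB : B * Bᴴ = N := by
    rw [conjTranspose_mul, Matrix.mul_assoc, ← Matrix.mul_assoc U, ← star_eq_conjTranspose U,
      mem_unitaryGroup_iff.mp hU, Matrix.one_mul, hN.posSemidef_sqrt.1.eq, hN.sqrt_mul_sqrt]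
  have hAB : (Aᴴ * B).trace.re = traceNorm (A * hN.sqrt) := by
    rw [hA, ← Matrix.mul_assoc, trace_mul_comm, hF, Complex.ofReal_re]
  have hAA' : (Aᴴ * A).trace.re = M.trace.re := by rw [hA, hM.sqrt_mul_sqrt]
  have hBB' : (Bᴴ * B).trace.re = N.trace.re := by rw [trace_mul_comm, hBB]
  have hsum := re_trace_conjTranspose_add_mul_add A B
  have hdiff := re_trace_conjTranspose_sub_mul_sub A B
  simp only [RCLike.re_to_complex] at hsum hdiff
  have key := traceNorm_mul_conjTranspose_sub_sq_le A B
  rw [hAA, hBB, hsum, hdiff, hAB, hAA', hBB'] at key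
  linear_combination key
end

section
/- Equivalence of WPDR and min-max EUR for predictability and visibility: for a qubit state ρ with 𝒫 = |Tr(σ_Z ρ)| and 𝒱 = max_{W∈XY} |Tr(σ_W ρ)|, the inequality H_min(Z) + min_{W∈XY} H_max(W) ≥ 1 holds if and only if 𝒫² + 𝒱² ≤ 1. -/
open ComplexOrder

noncomputable def sigmaZ : Matrix (Fin 2) (Fin 2) ℂ := !![1, 0; 0, -1]

/-- σ_W for phase φ in the XY plane. -/
noncomputable def sigmaW (φ : ℝ) : Matrix (Fin 2) (Fin 2) ℂ :=
  !![0, Complex.exp (-(Complex.I * φ)); Complex.exp (Complex.I * φ), 0]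

/-!
Write `ρ = !![a, conj b; b, d]`. Then `𝒫 = |a - d|`, and `Tr(σ_W ρ) = 2 Re(e^{-iφ} b)`, so that
`𝒱 = 2‖b‖`, attained at `φ = arg b`. Positivity of `ρ` gives `‖b‖² ≤ a d`, hence
`𝒫² + 𝒱² ≤ (a + d)² = 1`; in particular `𝒱 ≤ 1`. Since `log₂` is strictly increasing, the
uncertainty relation reads `1 + 𝒫 ≤ 1 + √(1 - 𝒱²)`, which for `𝒱 ≤ 1` is `𝒫² + 𝒱² ≤ 1`.
-/

open Complex ComplexConjugate

theorem neg_logb_add_logb_ge_one_iff {P V : ℝ} (hP : 0 ≤ P) (hV : V ^ 2 ≤ 1) :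
    -Real.logb 2 ((1 + P) / 2) + Real.logb 2 (1 + √(1 - V ^ 2)) ≥ 1 ↔ P ^ 2 + V ^ 2 ≤ 1 := by
  have hhalf : Real.logb 2 ((1 + P) / 2) = Real.logb 2 (1 + P) - 1 := by
    rw [Real.logb_div (by positivity) two_ne_zero, Real.logb_self_eq_one one_lt_two]
  calc -Real.logb 2 ((1 + P) / 2) + Real.logb 2 (1 + √(1 - V ^ 2)) ≥ 1
      ↔ Real.logb 2 (1 + P) ≤ Real.logb 2 (1 + √(1 - V ^ 2)) := by
        rw [hhalf, ge_iff_le]; constructor <;> intro h <;> linarith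
    _ ↔ P ≤ √(1 - V ^ 2) := by
        rw [Real.logb_le_logb one_lt_two (by positivity) (by positivity), add_le_add_iff_left]
    _ ↔ P ^ 2 + V ^ 2 ≤ 1 := by
        rw [Real.le_sqrt hP (by linarith), le_sub_iff_add_le]

theorem trace_sigmaZ_mul (ρ : Matrix (Fin 2) (Fin 2) ℂ) :
    (sigmaZ * ρ).trace = ρ 0 0 - ρ 1 1 := by
  simp [sigmaZ, Matrix.trace_fin_two, Matrix.vecMul, dotProduct, sub_eq_add_neg]

theorem trace_sigmaW_mul (φ : ℝ) (ρ : Matrix (Fin 2) (Fin 2) ℂ) :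
    (sigmaW φ * ρ).trace = cexp (-(I * φ)) * ρ 1 0 + cexp (I * φ) * ρ 0 1 := by
  simp [sigmaW, Matrix.trace_fin_two, Matrix.vecMul, dotProduct]

theorem Matrix.IsHermitian.trace_sigmaW_mul {ρ : Matrix (Fin 2) (Fin 2) ℂ}
    (hρ : ρ.IsHermitian) (φ : ℝ) :
    (sigmaW φ * ρ).trace = ((2 * (cexp (-(I * (φ : ℂ))) * ρ 1 0).re : ℝ) : ℂ) := by
  have hconj : cexp (I * φ) * ρ 0 1 = conj (cexp (-(I * φ)) * ρ 1 0) := by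
    rw [← hρ.apply 0 1, map_mul, ← Complex.exp_conj]
    simp
  rw [_root_.trace_sigmaW_mul, hconj, add_conj]

theorem Matrix.IsHermitian.isLUB_norm_trace_sigmaW_mul {ρ : Matrix (Fin 2) (Fin 2) ℂ}
    (hρ : ρ.IsHermitian) :
    IsLUB {x : ℝ | ∃ φ : ℝ, x = ‖(sigmaW φ * ρ).trace‖} (2 * ‖ρ 1 0‖) := by
  have hrot : ∀ φ : ℝ, ‖cexp (-(I * (φ : ℂ))) * ρ 1 0‖ = ‖ρ 1 0‖ := fun φ => by
    simp [norm_exp]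
  have hmax : cexp (-(I * (ρ 1 0).arg)) * ρ 1 0 = ‖ρ 1 0‖ := by
    nth_rewrite 2 [← norm_mul_exp_arg_mul_I (ρ 1 0)]
    rw [mul_left_comm, ← Complex.exp_add, neg_add_eq_zero.mpr (mul_comm _ _), Complex.exp_zero,
      mul_one]
  refine ⟨?_, fun y hy => hy ⟨(ρ 1 0).arg, ?_⟩⟩
  · rintro x ⟨φ, rfl⟩
    rw [hρ.trace_sigmaW_mul, norm_real, Real.norm_eq_abs, abs_mul, abs_two, ← hrot φ]
    gcongr
    exact abs_re_le_norm _
  · rw [hρ.trace_sigmaW_mul, hmax, ofReal_re, norm_real, Real.norm_of_nonneg (by positivity)]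

theorem Matrix.PosSemidef.norm_sub_sq_add_sq_le {ρ : Matrix (Fin 2) (Fin 2) ℂ}
    (hρ : ρ.PosSemidef) :
    ‖ρ 0 0 - ρ 1 1‖ ^ 2 + (2 * ‖ρ 1 0‖) ^ 2 ≤ ‖ρ.trace‖ ^ 2 := by
  obtain ⟨a, -, hρa : (a : ℂ) = ρ 0 0⟩ := RCLike.nonneg_iff_exists_ofReal.mp hρ.diag_nonneg
  obtain ⟨d, -, hρd : (d : ℂ) = ρ 1 1⟩ := RCLike.nonneg_iff_exists_ofReal.mp hρ.diag_nonneg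
  have hdet : ρ.det = ((a * d - ‖ρ 1 0‖ ^ 2 : ℝ) : ℂ) := by
    rw [Matrix.det_fin_two, ← hρ.isHermitian.apply 0 1, ← hρa, ← hρd, star_def, mul_comm _ (ρ 1 0),
      mul_conj, normSq_eq_norm_sq]
    push_cast
    rfl
  have hb : ‖ρ 1 0‖ ^ 2 ≤ a * d := by
    have := hρ.det_nonneg
    rw [hdet, zero_le_real] at this
    linarith
  rw [Matrix.trace_fin_two, ← hρa, ← hρd, ← ofReal_sub, ← ofReal_add, norm_real, norm_real,
    Real.norm_eq_abs, Real.norm_eq_abs, sq_abs, sq_abs]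
  nlinarith

/-- Equivalence of the min–max EUR (in the form
H_min(Z) = −log₂((1+𝒫)/2), min H_max(W) = log₂(1+√(1−𝒱²))) and the WPDR 𝒫²+𝒱²≤1. -/
theorem eur_iff_wpdr
    (ρ : Matrix (Fin 2) (Fin 2) ℂ) (hρ : ρ.PosSemidef) (htr : ρ.trace = 1) :
    (-Real.logb 2 ((1 + ‖(sigmaZ * ρ).trace‖) / 2)
        + Real.logb 2 (1 + Real.sqrt (1 -
            (sSup {x : ℝ | ∃ φ : ℝ, x = ‖(sigmaW φ * ρ).trace‖}) ^ 2)) ≥ 1)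
      ↔ (‖(sigmaZ * ρ).trace‖) ^ 2
          + (sSup {x : ℝ | ∃ φ : ℝ, x = ‖(sigmaW φ * ρ).trace‖}) ^ 2 ≤ 1 := by
  rw [hρ.isHermitian.isLUB_norm_trace_sigmaW_mul.csSup_eq ⟨_, 0, rfl⟩]
  have hwpdr : ‖(sigmaZ * ρ).trace‖ ^ 2 + (2 * ‖ρ 1 0‖) ^ 2 ≤ 1 := by
    simpa [trace_sigmaZ_mul, htr] using hρ.norm_sub_sq_add_sq_le
  have hV : (2 * ‖ρ 1 0‖) ^ 2 ≤ 1 := by nlinarith [sq_nonneg ‖(sigmaZ * ρ).trace‖]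
  exact neg_logb_add_logb_ge_one_iff (norm_nonneg _) hV
end

section
/- The function transformation identity: −log((1+D)/2) + log(1 + √(1−V²)) ≥ 1 (log base 2) holds for D, V ∈ [0,1] if and only if D² + V² ≤ 1. -/
namespace Real

theorem one_le_neg_logb_div_self_add_logb_iff {b a c : ℝ} (hb : 1 < b) (ha : 0 < a) (hc : 0 < c) :
    1 ≤ -logb b (a / b) + logb b c ↔ a ≤ c := by
  have hdiv : logb b (a / b) = logb b a - 1 := by
    rw [logb_div ha.ne' (by linarith), logb_self_eq_one hb]
  rw [hdiv, ← logb_le_logb hb ha hc]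
  constructor <;> intro h <;> linarith

theorem le_sqrt_one_sub_sq_iff {x y : ℝ} (hx : 0 ≤ x) (hy : y ^ 2 ≤ 1) :
    x ≤ √(1 - y ^ 2) ↔ x ^ 2 + y ^ 2 ≤ 1 := by
  rw [le_sqrt hx (sub_nonneg.mpr hy), le_sub_iff_add_le]

end Real

/-- Arithmetic equivalence underlying WPDR ↔ EUR: for D, V ∈ [0,1],
−log₂((1+D)/2) + log₂(1+√(1−V²)) ≥ 1 ↔ D² + V² ≤ 1. -/
theorem entropic_wpdr_equiv (D V : ℝ) (hD : D ∈ Set.Icc (0 : ℝ) 1)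
    (hV : V ∈ Set.Icc (0 : ℝ) 1) :
    (-Real.logb 2 ((1 + D) / 2) + Real.logb 2 (1 + Real.sqrt (1 - V ^ 2)) ≥ 1)
      ↔ D ^ 2 + V ^ 2 ≤ 1 := by
  have hV2 : V ^ 2 ≤ 1 := pow_le_one₀ hV.1 hV.2
  rw [ge_iff_le, Real.one_le_neg_logb_div_self_add_logb_iff one_lt_two (by linarith [hD.1])
    (by positivity), add_le_add_iff_left, Real.le_sqrt_one_sub_sq_iff hD.1 hV2]
end

section
/- Commutation of phase rotations with path-preserving qubit channels: let 𝒬 be a qubit quantum channel with 𝒬(|0⟩⟨0|) = |0⟩⟨0| and 𝒬(|1⟩⟨1|) = |1⟩⟨1|, and let ℛ_φ(·) = U_φ (·) U_φ† with U_φ = |0⟩⟨0| + e^{iφ}|1⟩⟨1|. Then ℛ_φ ∘ 𝒬 = 𝒬 ∘ ℛ_φ for all φ. -/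
open Matrix

/-- A qubit CPTP map, presented through a Kraus decomposition (Choi's theorem). -/
def IsCPTP (Q : Matrix (Fin 2) (Fin 2) ℂ →ₗ[ℂ] Matrix (Fin 2) (Fin 2) ℂ) : Prop :=
  ∃ (m : ℕ) (K : Fin m → Matrix (Fin 2) (Fin 2) ℂ),
    (∀ A, Q A = ∑ i, K i * A * (K i)ᴴ) ∧ (∑ i, (K i)ᴴ * K i = 1)

/-- The phase unitary U_φ = |0⟩⟨0| + e^{iφ}|1⟩⟨1|. -/
noncomputable def Uphase (φ : ℝ) : Matrix (Fin 2) (Fin 2) ℂ :=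
  !![1, 0; 0, Complex.exp (Complex.I * φ)]

/-!
The diagonal entry `(k, k)` of `∑ i, Kᵢ |j⟩⟨j| Kᵢᴴ` is `∑ i, |(Kᵢ)ₖⱼ|²`, so a Kraus map fixing every
basis projector `|j⟩⟨j|` has only diagonal Kraus operators. These commute with the diagonal
unitary `U_φ`, so `U_φ` can be moved through every Kraus term.
-/

namespace Matrix

variable {n : Type*} [Fintype n]

theorem kraus_sum_conj_of_commute {R ι : Type*} [CommSemiring R] [StarRing R] [Fintype ι]
    (K : ι → Matrix n n R) {U : Matrix n n R} (hK : ∀ i, Commute (K i) U) (A : Matrix n n R) :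
    U * (∑ i, K i * A * (K i)ᴴ) * Uᴴ = ∑ i, K i * (U * A * Uᴴ) * (K i)ᴴ := by
  rw [Matrix.mul_sum, Finset.sum_mul]
  refine Finset.sum_congr rfl fun i _ => ?_
  have hKU : U * K i = K i * U := (hK i).eq.symm
  have hKUH : (K i)ᴴ * Uᴴ = Uᴴ * (K i)ᴴ := by
    simpa only [conjTranspose_mul] using congrArg conjTranspose hKU
  simp only [← mul_assoc, hKU]
  simp only [mul_assoc, hKUH]

variable [DecidableEq n]

theorem IsDiag.commute_diagonal {R : Type*} [CommSemiring R] {K : Matrix n n R} (hK : K.IsDiag)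
    (d : n → R) : Commute K (diagonal d) := by
  simpa only [hK.diagonal_diag] using Matrix.commute_diagonal K.diag d

variable {𝕜 : Type*} [RCLike 𝕜]

theorem mul_single_one_mul_conjTranspose_apply_self (K : Matrix n n 𝕜) (j k : n) :
    (K * single j j (1 : 𝕜) * Kᴴ) k k = (‖K k j‖ ^ 2 : ℝ) := by
  simp [mul_apply, single_apply, ite_and, RCLike.mul_conj]

theorem isDiag_of_kraus_sum_single_eq {ι : Type*} [Fintype ι] (K : ι → Matrix n n 𝕜)
    (hK : ∀ j, ∑ i, K i * single j j 1 * (K i)ᴴ = single j j 1) (i : ι) : (K i).IsDiag := by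
  intro k j hkj
  have hsum : ∑ i, ‖K i k j‖ ^ 2 = 0 := by
    have := congrFun (congrFun (hK j) k) k
    rw [sum_apply, single_apply_of_row_ne hkj.symm] at this
    simp only [mul_single_one_mul_conjTranspose_apply_self] at this
    exact_mod_cast this
  simpa using (Finset.sum_eq_zero_iff_of_nonneg (fun i _ => sq_nonneg ‖K i k j‖)).mp hsum i
    (Finset.mem_univ i)

end Matrix

theorem uphase_eq_diagonal (φ : ℝ) : Uphase φ = diagonal ![1, Complex.exp (Complex.I * φ)] :=
  (diagonal_vec2 _ _).symm

/-- A qubit channel fixing both computational basis projectors commutes with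
every phase rotation ℛ_φ(·) = U_φ(·)U_φ†. -/
theorem channel_commutes_with_phase
    (Q : Matrix (Fin 2) (Fin 2) ℂ →ₗ[ℂ] Matrix (Fin 2) (Fin 2) ℂ)
    (hQ : IsCPTP Q)
    (h0 : Q !![1, 0; 0, 0] = !![1, 0; 0, 0])
    (h1 : Q !![0, 0; 0, 1] = !![0, 0; 0, 1])
    (φ : ℝ) (A : Matrix (Fin 2) (Fin 2) ℂ) :
    Uphase φ * Q A * (Uphase φ)ᴴ = Q (Uphase φ * A * (Uphase φ)ᴴ) := by
  obtain ⟨m, K, hK, -⟩ := hQ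
  have hfix : ∀ j, ∑ i, K i * single j j 1 * (K i)ᴴ = single j j 1 := by
    simp only [Fin.forall_fin_two, ← hK, ← diagonal_single, diagonal_fin_two]
    simp [h0, h1]
  have hdiag := isDiag_of_kraus_sum_single_eq K hfix
  rw [hK, hK, uphase_eq_diagonal]
  exact kraus_sum_conj_of_commute K (fun i => (hdiag i).commute_diagonal _) A
end
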